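/- In PHS(T): S(v) = 0 for every node v of depth 1; and for every edge (u, v) ∈ E with u ≠ 0 and Ψ((u, v)) = c, the pair (S(u), S(v)) is an edge of E with label Ψ((S(u), S(v))) = c. -/

import Mathlib

/-- `heapHList T i = [h_0, h_1, …, h_i]`: `h_0 = ε` and `h_i` is the shortest
prefix of `T[i:]` (the suffix of `T` starting at 1-indexed position `i`) not
among `h_0, …, h_{i-1}` (falling back to `T[i:]` itself if every prefix
already occurs there). -/
def heapHList {α : Type*} [DecidableEq α] (T : List α) : ℕ → List (List α)
  | 0 => [[]]
  | i + 1 =>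
    let prev := heapHList T i
    let suf := T.drop i
    prev ++ [(((List.range (suf.length + 1)).find?
        (fun k => decide (suf.take k ∉ prev))).elim suf fun k => suf.take k)]

/-- `heapH T i = h_i`. -/
def heapH {α : Type*} [DecidableEq α] (T : List α) (i : ℕ) : List α :=
  (heapHList T i).getD i []

/-- `T` ends with a letter that occurs nowhere else in `T`
(1-indexed: `T[i] ≠ T[n]` for all `1 ≤ i ≤ n - 1`). -/
def EndsUnique {α : Type*} (T : List α) : Prop :=
  ∀ i, i + 1 < T.length → T[i]? ≠ T[T.length - 1]?


lemma heapHList_length {α : Type*} [DecidableEq α] (T : List α) (i : ℕ) :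
    (heapHList T i).length = i + 1 := by
  induction i with
  | zero => simp [heapHList]
  | succ i ih => simp [heapHList, ih]

lemma nil_mem_heapHList {α : Type*} [DecidableEq α] (T : List α) (i : ℕ) :
    ([] : List α) ∈ heapHList T i := by
  induction i with
  | zero => simp [heapHList]
  | succ i ih =>
    unfold heapHList
    exact List.mem_append_left _ ih

lemma heapH_zero {α : Type*} [DecidableEq α] (T : List α) :
    heapH T 0 = [] := by
  simp [heapH, heapHList]

lemma heapH_ne_nil {α : Type*} [DecidableEq α] (T : List α) {j : ℕ}
    (h1 : 1 ≤ j) (h2 : j ≤ T.length) : heapH T j ≠ [] := by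
  obtain ⟨i, rfl⟩ : ∃ i, j = i + 1 := ⟨j - 1, (Nat.succ_pred_eq_of_pos h1).symm⟩
  have hlen : (heapHList T i).length = i + 1 := heapHList_length T i
  have hx : heapH T (i + 1) =
      (((List.range ((T.drop i).length + 1)).find?
        (fun k => decide ((T.drop i).take k ∉ heapHList T i))).elim (T.drop i)
        fun k => (T.drop i).take k) := by
    show (heapHList T (i+1)).getD (i+1) [] = _
    conv_lhs => rw [heapHList]
    rw [List.getD, ← hlen, List.getElem?_concat_length]
    rfl
  rw [hx]
  rcases hfind : (List.range ((T.drop i).length + 1)).find?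
      (fun k => decide ((T.drop i).take k ∉ heapHList T i)) with _ | k
  · simp only [Option.elim]
    intro hnil
    rw [List.drop_eq_nil_iff] at hnil
    omega
  · simp only [Option.elim]
    have := List.find?_some hfind
    simp only [decide_eq_true_eq] at this
    intro hnil
    rw [hnil] at this
    exact this (nil_mem_heapHList T i)

/-- In `PHS(T)`: `S(v) = 0` for every node `v` of depth 1
(i.e. whose path label `h_v` is a single letter), and for every edge
`(u, v) ∈ E` with `u ≠ 0` and label `c`, the pair `(S(u), S(v))` is an edge
of `E` with label `c`, i.e. `h_{S(u)} c = h_{S(v)}`.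
Here `S` is any suffix-link map: `S i ∈ {0, …, n}` and `h_i = c · h_{S(i)}`
for some letter `c`, for all `1 ≤ i ≤ n`. -/
theorem statement9 {α : Type*} [DecidableEq α] (T : List α) (n : ℕ)
    (hn : n = T.length) (hpos : 1 ≤ n) (hu : EndsUnique T)
    (S : ℕ → ℕ)
    (hS : ∀ i, 1 ≤ i → i ≤ n →
      S i ≤ n ∧ ∃ c : α, heapH T i = c :: heapH T (S i)) :
    (∀ v, 1 ≤ v → v ≤ n → (∃ c : α, heapH T v = [c]) → S v = 0) ∧
    (∀ u v, 1 ≤ u → u ≤ n → v ≤ n → ∀ c : α,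
      heapH T u ++ [c] = heapH T v →
      heapH T (S u) ++ [c] = heapH T (S v)) := by
  constructor
  · intro v h1 h2 ⟨c, hc⟩
    obtain ⟨hle, a, ha⟩ := hS v h1 h2
    rw [hc] at ha
    have hnil : heapH T (S v) = [] := by
      injection ha with _ h; exact h.symm
    by_contra h0
    exact heapH_ne_nil T (Nat.one_le_iff_ne_zero.mpr h0) (hn ▸ hle) hnil
  · intro u v hu1 hu2 hv2 c hedge
    have hv1 : 1 ≤ v := by
      by_contra h
      interval_cases v
      rw [heapH_zero] at hedge
      simp at hedge
    obtain ⟨_, a, ha⟩ := hS u hu1 hu2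
    obtain ⟨_, b, hb⟩ := hS v hv1 hv2
    rw [ha, hb] at hedge
    simp only [List.cons_append, List.cons.injEq] at hedge
    exact hedge.2
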